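/- arXiv:1605.07859 — 6 statements merged into one kernel-verified Lean document; each statement's English description precedes it below -/
import Mathlib

section
/- If p is a complex polynomial of degree 3 with three distinct fixed points z₁, z₂, z₃, then at least one of the multipliers p'(zᵢ) has real part at least 1. -/
/-! The polynomial `p - X` is a cubic vanishing at the three fixed points, so
`p - X = c (X - z₁)(X - z₂)(X - z₃)` and `p'(zᵢ) = 1 + wᵢ` with `wᵢ = c ∏_{j ≠ i} (zᵢ - zⱼ)`.
Partial fractions give `w₁⁻¹ + w₂⁻¹ + w₃⁻¹ = 0`; since `w` and `w⁻¹` have real parts of the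
same sign, the `wᵢ` cannot all lie in the open left half-plane. -/

open Polynomial

theorem Polynomial.eq_C_leadingCoeff_mul_prod_X_sub_C_of_card_eq_natDegree {R : Type*}
    [CommRing R] [IsDomain R] {q : R[X]} {s : Finset R} (hs : ∀ x ∈ s, q.IsRoot x)
    (hcard : s.card = q.natDegree) :
    q = C q.leadingCoeff * ∏ x ∈ s, (X - C x) := by
  by_cases hq : q = 0
  · simp [hq]
  have hroots : s.val = q.roots :=
    Multiset.eq_of_le_of_card_le ((Multiset.le_iff_subset s.nodup).2 fun x hx =>
      (mem_roots hq).2 (hs x hx)) ((card_roots' q).trans hcard.ge)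
  rw [Finset.prod_eq_multiset_prod, hroots,
    C_leadingCoeff_mul_prod_multiset_X_sub_C (hroots ▸ hcard)]

theorem Polynomial.eval_derivative_eq_one_add_of_sub_X_eq {R : Type*} [CommRing R] {p : R[X]}
    {c a b d : R} (h : p - X = C c * ((X - C a) * ((X - C b) * (X - C d)))) :
    p.derivative.eval a = 1 + c * ((a - b) * (a - d)) := by
  rw [← sub_add_cancel p X, derivative_add, eval_add, h]
  simp [derivative_mul, add_comm]

theorem Complex.inv_re_neg_of_re_neg {w : ℂ} (hw : w.re < 0) : w⁻¹.re < 0 := by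
  rw [inv_re]
  exact div_neg_of_neg_of_pos hw (normSq_pos.2 fun h => hw.ne (by simp [h]))

theorem Complex.exists_nonneg_re_of_inv_add_inv_add_inv_eq_zero {w₁ w₂ w₃ : ℂ}
    (h : w₁⁻¹ + w₂⁻¹ + w₃⁻¹ = 0) : 0 ≤ w₁.re ∨ 0 ≤ w₂.re ∨ 0 ≤ w₃.re := by
  by_contra! hneg
  obtain ⟨h₁, h₂, h₃⟩ := hneg
  have hre := congrArg re h
  simp only [add_re, zero_re] at hre
  linarith [inv_re_neg_of_re_neg h₁, inv_re_neg_of_re_neg h₂, inv_re_neg_of_re_neg h₃]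

theorem inv_add_inv_add_inv_eq_zero {K : Type*} [Field K] (c : K) {a b d : K}
    (hab : a ≠ b) (had : a ≠ d) (hbd : b ≠ d) :
    (c * ((a - b) * (a - d)))⁻¹ + (c * ((b - a) * (b - d)))⁻¹ +
      (c * ((d - a) * (d - b)))⁻¹ = 0 := by
  have hab' := sub_ne_zero.2 hab
  have had' := sub_ne_zero.2 had
  have hbd' := sub_ne_zero.2 hbd
  simp only [mul_inv]
  field_simp
  ring

theorem cubic_unattractive_fixed_point (p : ℂ[X]) (hdeg : p.natDegree = 3)
    (z₁ z₂ z₃ : ℂ) (h12 : z₁ ≠ z₂) (h13 : z₁ ≠ z₃) (h23 : z₂ ≠ z₃)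
    (hf₁ : p.eval z₁ = z₁) (hf₂ : p.eval z₂ = z₂) (hf₃ : p.eval z₃ = z₃) :
    1 ≤ (p.derivative.eval z₁).re ∨ 1 ≤ (p.derivative.eval z₂).re ∨
      1 ≤ (p.derivative.eval z₃).re := by
  have hdeg' : (p - X).natDegree = 3 := by
    rw [natDegree_sub_eq_left_of_natDegree_lt] <;> simp [hdeg]
  set c := (p - X).leadingCoeff
  have hfac : p - X = C c * ((X - C z₁) * ((X - C z₂) * (X - C z₃))) := by
    have hroots : ∀ x ∈ ({z₁, z₂, z₃} : Finset ℂ), (p - X).IsRoot x := by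
      simp [hf₁, hf₂, hf₃]
    rw [eq_C_leadingCoeff_mul_prod_X_sub_C_of_card_eq_natDegree hroots
      (by rw [hdeg', Finset.card_eq_three]; exact ⟨z₁, z₂, z₃, h12, h13, h23, rfl⟩),
      Finset.prod_insert (by simp [h12, h13]), Finset.prod_pair h23]
  have hd₁ := eval_derivative_eq_one_add_of_sub_X_eq hfac
  have hd₂ := eval_derivative_eq_one_add_of_sub_X_eq (a := z₂) (b := z₁) (d := z₃)
    (hfac.trans (by ring))
  have hd₃ := eval_derivative_eq_one_add_of_sub_X_eq (a := z₃) (b := z₁) (d := z₂)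
    (hfac.trans (by ring))
  rw [hd₁, hd₂, hd₃]
  rcases Complex.exists_nonneg_re_of_inv_add_inv_add_inv_eq_zero
    (inv_add_inv_add_inv_eq_zero c h12 h13 h23) with h | h | h <;>
    simp only [Complex.add_re, Complex.one_re, le_add_iff_nonneg_right] <;> tauto
end

section
/- Let z₁, …, zₙ be distinct complex numbers that are fixed points of a polynomial p, with multipliers αᵢ = p'(zᵢ). For each k with 2 ≤ k ≤ n, the divided difference satisfies f[z₁,z₁,…,z_k,z_k] = Σ_{i=1}^{k} (αᵢ - 1)/π^k_i, where π^k_i = ∏_{j=1, j≠i}^{k} (zᵢ - zⱼ)². -/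
/-!
Since every `zᵢ` is a fixed point, `g = p - id` vanishes at all nodes while `g' = p' - 1` takes
the values `αᵢ - 1`. Divided differences are linear in the data and those of the identity vanish on
three or more nodes, so the left side is the divided difference of `g`.

For a function vanishing at all nodes, and any node list in which equal nodes are adjacent and
occur at most twice, the divided difference is `∑ g'(x) / ∏_{y ≠ x} (x - y)`, summed over the
doubled nodes `x`, the product running over the other nodes with multiplicity. This closed form
survives the recursion `f[a, …, b] = (f[…, b] - f[a, …]) / (b - a)` term by term: removing `a`
(resp. `b`) divides the weight of `x` by `x - a` (resp. `x - b`), and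
`(x - a) - (x - b) = b - a`; an endpoint `x` instead loses its term on one side.
-/

open Polynomial Finset

/-- Divided differences with possibly repeated (adjacent) nodes:
`g` gives the function values and `d` the derivative values at doubled nodes. -/
noncomputable def dd (g d : ℂ → ℂ) : List ℂ → ℂ
  | [] => 0
  | [z] => g z
  | [z, w] => if z = w then d z else (g w - g z) / (w - z)
  | z :: w :: u :: rest =>
    (dd g d (w :: u :: rest) - dd g d ((z :: w :: u :: rest).dropLast)) /
      ((u :: rest).getLast (by simp) - z)
termination_by l => l.length

theorem List.cons_append_induction {α : Type*} {motive : List α → Prop} (nil : motive [])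
    (singleton : ∀ x, motive [x]) (pair : ∀ x y, motive [x, y])
    (step : ∀ a m b, m ≠ [] → motive (m ++ [b]) → motive (a :: m) → motive (a :: m ++ [b])) :
    ∀ l, motive l
  | [] => nil
  | [x] => singleton x
  | [x, y] => pair x y
  | a :: w :: u :: rest => by
    have hne : w :: u :: rest ≠ [] := List.cons_ne_nil _ _
    have hdrop : (a :: w :: u :: rest).dropLast = a :: (w :: u :: rest).dropLast := rfl
    have htail := cons_append_induction nil singleton pair step (w :: u :: rest)
    have hinit := cons_append_induction nil singleton pair step (a :: w :: u :: rest).dropLast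
    rw [← List.dropLast_append_getLast hne] at htail ⊢
    rw [hdrop] at hinit
    exact step a _ _ (by simp) htail hinit
termination_by l => l.length

theorem dd_cons_append (g d : ℂ → ℂ) (a b : ℂ) {m : List ℂ} (hm : m ≠ []) :
    dd g d (a :: m ++ [b]) = (dd g d (m ++ [b]) - dd g d (a :: m)) / (b - a) := by
  obtain ⟨w, m, rfl⟩ := List.exists_cons_of_ne_nil hm
  obtain ⟨u, rest, hur⟩ : ∃ u rest, m ++ [b] = u :: rest := List.exists_cons_of_ne_nil (by simp)
  have hlast : (u :: rest).getLast (by simp) = b := by simp [← hur]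
  have hinit : (a :: w :: u :: rest).dropLast = a :: w :: m := by
    rw [← hur, ← List.cons_append, ← List.cons_append, List.dropLast_concat]
  simp only [List.cons_append, hur]
  rw [dd, hlast, hinit]

theorem dd_sub (g₁ d₁ g₂ d₂ : ℂ → ℂ) (l : List ℂ) :
    dd (fun x => g₁ x - g₂ x) (fun x => d₁ x - d₂ x) l = dd g₁ d₁ l - dd g₂ d₂ l := by
  induction l using List.cons_append_induction with
  | nil => simp [dd]
  | singleton x => simp [dd]
  | pair x y => simp only [dd]; split_ifs <;> ring
  | step a m b hm htail hinit => simp only [dd_cons_append _ _ _ _ hm, htail, hinit]; ring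

theorem dd_id (l : List ℂ) (hl : 2 ≤ l.length) :
    dd (fun x => x) (fun _ => 1) l = if l.length = 2 then 1 else 0 := by
  induction l using List.cons_append_induction with
  | nil => simp at hl
  | singleton x => simp at hl
  | pair x y =>
    simp only [dd, List.length_cons, List.length_nil, zero_add, Nat.reduceAdd, if_true]
    split_ifs with h
    · rfl
    · exact div_self (sub_ne_zero.mpr (Ne.symm h))
  | step a m b hm htail hinit =>
    have hlen : 2 ≤ m.length + 1 := by have := List.length_pos_iff.mpr hm; omega
    rw [dd_cons_append _ _ _ _ hm, htail (by simpa using hlen), hinit (by simpa using hlen)]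
    simp [hm]

/-- Equal nodes are adjacent and no node occurs more than twice. -/
def HermiteNodes (l : List ℂ) : Prop := ∀ x y, ¬ [x, y, x].Sublist l

namespace HermiteNodes

theorem mono {l l' : List ℂ} (h : HermiteNodes l') (hl : l.Sublist l') : HermiteNodes l :=
  fun x y hxy => h x y (hxy.trans hl)

theorem count_le_two {l : List ℂ} (h : HermiteNodes l) (x : ℂ) : l.count x ≤ 2 := by
  by_contra! hx
  exact h x x (List.replicate_sublist_iff.mpr hx)

theorem ne_of_cons_append {a b : ℂ} {m : List ℂ} (h : HermiteNodes (a :: m ++ [b]))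
    (hm : m ≠ []) : a ≠ b := by
  obtain ⟨w, m, rfl⟩ := List.exists_cons_of_ne_nil hm
  rintro rfl
  exact h a w (by simp)

theorem cons_cons {a : ℂ} {l : List ℂ} (h : HermiteNodes l) (ha : a ∉ l) :
    HermiteNodes (a :: a :: l) := by
  have mem_of_pair : ∀ y, [y, a].Sublist (a :: l) → a ∈ l := by
    intro y hya
    rcases List.sublist_cons_iff.mp hya with hya | ⟨_, hr, hya⟩
    · exact hya.subset (by simp)
    · cases hr
      exact hya.subset (by simp)
  intro x y hxy
  rcases List.sublist_cons_iff.mp hxy with hxy | ⟨_, hr, hxy⟩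
  · rcases List.sublist_cons_iff.mp hxy with hxy | ⟨_, hr, hxy⟩
    · exact h x y hxy
    · cases hr
      exact ha (hxy.subset (by simp))
  · cases hr
    exact ha (mem_of_pair y hxy)

end HermiteNodes

noncomputable def nodeWeight (l : List ℂ) (x : ℂ) : ℂ :=
  (l.map fun y => if y = x then 1 else x - y).prod

noncomputable def hermiteTerm (d : ℂ → ℂ) (l : List ℂ) (x : ℂ) : ℂ :=
  if l.count x = 2 then d x / nodeWeight l x else 0

noncomputable def hermiteSum (d : ℂ → ℂ) (l : List ℂ) : ℂ :=
  ∑ x ∈ l.toFinset, hermiteTerm d l x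

theorem nodeWeight_ne_zero (l : List ℂ) (x : ℂ) : nodeWeight l x ≠ 0 := by
  refine List.prod_ne_zero fun h => ?_
  obtain ⟨y, -, hy⟩ := List.mem_map.mp h
  split_ifs at hy with hyx
  · exact one_ne_zero hy
  · exact hyx (sub_eq_zero.mp hy).symm

theorem nodeWeight_nil (x : ℂ) : nodeWeight [] x = 1 := rfl

theorem nodeWeight_cons (a : ℂ) (l : List ℂ) (x : ℂ) :
    nodeWeight (a :: l) x = (if a = x then 1 else x - a) * nodeWeight l x := by
  simp [nodeWeight]

theorem nodeWeight_append (l₁ l₂ : List ℂ) (x : ℂ) :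
    nodeWeight (l₁ ++ l₂) x = nodeWeight l₁ x * nodeWeight l₂ x := by
  simp [nodeWeight]

theorem nodeWeight_flatMap {α : Type*} (s : List α) (f : α → List ℂ) (x : ℂ) :
    nodeWeight (s.flatMap f) x = (s.map fun a => nodeWeight (f a) x).prod := by
  induction s with
  | nil => rfl
  | cons a s ih => rw [List.flatMap_cons, nodeWeight_append, ih, List.map_cons, List.prod_cons]

theorem hermiteSum_eq_sum_of_subset (d : ℂ → ℂ) {l l' : List ℂ} (h : l ⊆ l') :
    hermiteSum d l = ∑ x ∈ l'.toFinset, hermiteTerm d l x := by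
  refine Finset.sum_subset (fun x hx => ?_) fun x _ hx => ?_
  · simpa using h (List.mem_toFinset.mp hx)
  · simp [hermiteTerm, List.count_eq_zero_of_not_mem (by simpa using hx)]

theorem hermiteTerm_append_sub_cons (d : ℂ → ℂ) {a b : ℂ} (m : List ℂ) (hab : a ≠ b)
    (ha : m.count a ≤ 1) (hb : m.count b ≤ 1) (x : ℂ) :
    hermiteTerm d (m ++ [b]) x - hermiteTerm d (a :: m) x =
      (b - a) * hermiteTerm d (a :: m ++ [b]) x := by
  have hQ := nodeWeight_ne_zero m x
  simp only [hermiteTerm, List.cons_append, nodeWeight_cons, nodeWeight_append, nodeWeight_nil,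
    List.count_cons, List.count_append, List.count_nil, beq_iff_eq]
  split_ifs <;> grind

theorem dd_eq_hermiteSum (g d : ℂ → ℂ) (l : List ℂ) (hl : HermiteNodes l)
    (hg : ∀ x ∈ l, g x = 0) : dd g d l = hermiteSum d l := by
  induction l using List.cons_append_induction with
  | nil => simp [dd, hermiteSum]
  | singleton x => simp [dd, hermiteSum, hermiteTerm, hg x]
  | pair x y =>
    by_cases hxy : x = y
    · subst hxy
      simp [dd, hermiteSum, hermiteTerm, nodeWeight]
    · simp [dd, hermiteSum, hermiteTerm, hxy, Ne.symm hxy, hg x, hg y]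
  | step a m b hm htail hinit =>
    have hab := hl.ne_of_cons_append hm
    have hsub_tail : (m ++ [b]).Sublist (a :: m ++ [b]) := by simp
    have hsub_init : (a :: m).Sublist (a :: m ++ [b]) := by simp
    have ha : m.count a ≤ 1 := by
      have := (hsub_init.count_le a).trans (hl.count_le_two a)
      rw [List.count_cons_self] at this
      omega
    have hb : m.count b ≤ 1 := by
      have := (hsub_tail.count_le b).trans (hl.count_le_two b)
      rw [List.count_append, List.count_singleton_self] at this
      omega
    rw [dd_cons_append _ _ _ _ hm,
      htail (hl.mono hsub_tail) fun x hx => hg x (hsub_tail.subset hx),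
      hinit (hl.mono hsub_init) fun x hx => hg x (hsub_init.subset hx),
      hermiteSum_eq_sum_of_subset d hsub_tail.subset,
      hermiteSum_eq_sum_of_subset d hsub_init.subset,
      hermiteSum_eq_sum_of_subset d (List.Subset.refl _), ← sum_sub_distrib]
    simp only [hermiteTerm_append_sub_cons d m hab ha hb, ← mul_sum]
    exact mul_div_cancel_left₀ _ (sub_ne_zero.mpr hab.symm)

section DoubledNodes

variable {ι : Type*} (z : ι → ℂ) {s : List ι}

theorem hermiteNodes_flatMap_pair (hs : s.Nodup) (hz : Set.InjOn z {i | i ∈ s}) :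
    HermiteNodes (s.flatMap fun i => [z i, z i]) := by
  induction s with
  | nil => simp [HermiteNodes]
  | cons i s ih =>
    rw [List.nodup_cons] at hs
    refine (ih hs.2 (hz.mono fun j hj => List.mem_cons_of_mem i hj)).cons_cons ?_
    simp only [List.mem_flatMap, List.mem_cons, List.not_mem_nil, or_false, or_self]
    rintro ⟨j, hj, hij⟩
    exact hs.1 (hz (by simp) (List.mem_cons_of_mem i hj) hij ▸ hj)

variable [DecidableEq ι]

theorem count_flatMap_pair (hs : s.Nodup) (hz : Set.InjOn z {i | i ∈ s}) {i : ι} (hi : i ∈ s) :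
    (s.flatMap fun j => [z j, z j]).count (z i) = 2 := by
  rw [List.count_flatMap, ← List.sum_toFinset _ hs, Finset.sum_eq_single i]
  · simp
  · intro j hj hji
    have : z j ≠ z i := fun h => hji (hz (by simpa using hj) hi h)
    simp [this]
  · simp [hi]

theorem nodeWeight_flatMap_pair (hs : s.Nodup) (hz : Set.InjOn z {i | i ∈ s}) {i : ι}
    (hi : i ∈ s) :
    nodeWeight (s.flatMap fun j => [z j, z j]) (z i) =
      ∏ j ∈ s.toFinset.erase i, (z i - z j) ^ 2 := by
  have hpair : ∀ j, nodeWeight [z j, z j] (z i) = (if z j = z i then 1 else z i - z j) ^ 2 := by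
    intro j; simp only [nodeWeight_cons, nodeWeight_nil]; split_ifs <;> ring
  rw [nodeWeight_flatMap, List.map_congr_left fun j _ => hpair j, ← List.prod_toFinset _ hs,
    ← Finset.mul_prod_erase _ _ (List.mem_toFinset.mpr hi), if_pos rfl, one_pow, one_mul]
  refine prod_congr rfl fun j hj => ?_
  obtain ⟨hji, hj⟩ := Finset.mem_erase.mp hj
  rw [if_neg fun h => hji (hz (by simpa using hj) hi h)]

theorem hermiteSum_flatMap_pair (d : ℂ → ℂ) (hs : s.Nodup) (hz : Set.InjOn z {i | i ∈ s}) :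
    hermiteSum d (s.flatMap fun i => [z i, z i]) =
      ∑ i ∈ s.toFinset, d (z i) / ∏ j ∈ s.toFinset.erase i, (z i - z j) ^ 2 := by
  have hset : (s.flatMap fun i => [z i, z i]).toFinset = s.toFinset.image z := by
    ext x; simp [eq_comm]
  rw [hermiteSum, hset, sum_image (by simpa using hz)]
  refine sum_congr rfl fun i hi => ?_
  rw [List.mem_toFinset] at hi
  rw [hermiteTerm, count_flatMap_pair z hs hz hi, if_pos rfl, nodeWeight_flatMap_pair z hs hz hi]

end DoubledNodes

/-- Statement (5): for fixed points `z i` of `p` with multipliers `α i`,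
`f[z₁,z₁,…,z_k,z_k] = Σ (αᵢ - 1)/πᵢᵏ`. (Indices `0,…,k-1`.) -/
theorem divided_difference_doubled_nodes (n : ℕ) (p : ℂ[X]) (z : ℕ → ℂ)
    (hz : ∀ i < n, ∀ j < n, z i = z j → i = j)
    (hfix : ∀ i < n, p.eval (z i) = z i)
    (α : ℕ → ℂ) (hα : ∀ i < n, p.derivative.eval (z i) = α i) :
    ∀ k, 2 ≤ k → k ≤ n →
      dd (fun w => p.eval w) (fun w => p.derivative.eval w)
          ((List.range k).flatMap fun i => [z i, z i]) =
        ∑ i ∈ Finset.range k,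
          (α i - 1) / ∏ j ∈ (Finset.range k).erase i, (z i - z j) ^ 2 := by
  intro k hk2 hkn
  have hk : ∀ i ∈ List.range k, i < n := fun i hi => (List.mem_range.mp hi).trans_le hkn
  have hinj : Set.InjOn z {i | i ∈ List.range k} := fun i hi j hj => hz i (hk i hi) j (hk j hj)
  set L := (List.range k).flatMap fun i => [z i, z i] with hL
  have hlen : L.length = 2 * k := by simp [L, mul_comm]
  have hfix' : ∀ x ∈ L, p.eval x - x = 0 := by
    intro x hx
    obtain ⟨i, hi, hx⟩ := List.mem_flatMap.mp hx
    obtain rfl : x = z i := by simpa using hx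
    rw [hfix i (hk i hi), sub_self]
  calc _ = dd (fun w => p.eval w - w) (fun w => p.derivative.eval w - 1) L +
        dd (fun w => w) (fun _ => 1) L := by rw [dd_sub]; ring
    _ = hermiteSum (fun w => p.derivative.eval w - 1) L := by
        rw [dd_id L (by omega), if_neg (by omega), add_zero,
          dd_eq_hermiteSum _ _ L (hermiteNodes_flatMap_pair z List.nodup_range hinj) hfix']
    _ = _ := by
        rw [hL, hermiteSum_flatMap_pair z _ List.nodup_range hinj, List.toFinset_range]
        exact sum_congr rfl fun i hi => by rw [hα i (hk i (List.mem_range.mpr (mem_range.mp hi)))]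
end

section
/- Let z₁, …, zₙ (n ≥ 2) be distinct complex numbers all lying on a common line in the complex plane, and let α₁, …, αₙ be complex numbers each with Re(αᵢ) < 1. Then the sum Σ_{i=1}^{n} (αᵢ - 1)/π_i is nonzero, where π_i = ∏_{j≠i} (zᵢ - zⱼ)². -/
/-!
If the `zᵢ` lie on a line with direction `v`, every difference `zᵢ - zⱼ` is a nonzero real
multiple of `v`, so `πᵢ = rᵢ v^(2(n-1))` with `rᵢ > 0`. Multiplying the sum by `v^(2(n-1))`
leaves `∑ (αᵢ - 1) / rᵢ`, whose real part is negative.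
-/

open Finset

theorem Collinear.exists_forall_sub_eq_ofReal_mul {s : Set ℂ} (h : Collinear ℝ s) :
    ∃ v : ℂ, ∀ w ∈ s, ∀ w' ∈ s, ∃ x : ℝ, w - w' = x * v := by
  obtain ⟨p, v, hv⟩ := (collinear_iff_exists_forall_eq_smul_vadd s).1 h
  refine ⟨v, fun w hw w' hw' => ?_⟩
  obtain ⟨a, rfl⟩ := hv w hw
  obtain ⟨b, rfl⟩ := hv w' hw'
  exact ⟨a - b, by simp only [vadd_eq_add, Complex.real_smul]; push_cast; ring⟩

theorem exists_pos_prod_sq_eq_ofReal_mul {ι : Type*} {s : Finset ι} {w : ι → ℂ} {v : ℂ}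
    (hw : ∀ j ∈ s, w j ≠ 0) (h : ∀ j ∈ s, ∃ x : ℝ, w j = x * v) :
    ∃ r : ℝ, 0 < r ∧ ∏ j ∈ s, w j ^ 2 = r * v ^ (2 * #s) := by
  choose! x hx using h
  have hx0 : ∀ j ∈ s, x j ≠ 0 := fun j hj h0 => hw j hj (by simp [hx j hj, h0])
  refine ⟨∏ j ∈ s, x j ^ 2, prod_pos fun j hj => sq_pos_of_ne_zero (hx0 j hj), ?_⟩
  rw [prod_congr rfl fun j hj => by rw [hx j hj, mul_pow], prod_mul_distrib, prod_const,
    pow_mul]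
  push_cast
  rfl

theorem sum_div_ne_zero_of_re_neg {ι : Type*} {s : Finset ι} (hs : s.Nonempty) {a π : ι → ℂ}
    {c : ℂ} (ha : ∀ i ∈ s, (a i).re < 0) (hπ : ∀ i ∈ s, ∃ r : ℝ, 0 < r ∧ π i = r * c)
    (hc : c ≠ 0) : ∑ i ∈ s, a i / π i ≠ 0 := by
  intro h
  have hneg : (∑ i ∈ s, a i / π i * c).re < 0 := by
    rw [Complex.re_sum]
    refine sum_neg (fun i hi => ?_) hs
    obtain ⟨r, hr, hπi⟩ := hπ i hi
    rw [hπi, ← div_div, div_mul_cancel₀ _ hc, Complex.div_ofReal_re]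
    exact div_neg_of_neg_of_pos (ha i hi) hr
  rw [← sum_mul, h, zero_mul, Complex.zero_re] at hneg
  exact hneg.false

theorem collinear_sum_ne_zero (n : ℕ) (hn : 2 ≤ n) (z : ℕ → ℂ)
    (hz : ∀ i < n, ∀ j < n, z i = z j → i = j)
    (hline : Collinear ℝ {w : ℂ | ∃ i < n, z i = w})
    (α : ℕ → ℂ) (hα : ∀ i < n, (α i).re < 1) :
    (∑ i ∈ Finset.range n,
        (α i - 1) / ∏ j ∈ (Finset.range n).erase i, (z i - z j) ^ 2) ≠ 0 := by
  obtain ⟨v, hv⟩ := hline.exists_forall_sub_eq_ofReal_mul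
  have hzmem : ∀ i < n, z i ∈ {w : ℂ | ∃ i < n, z i = w} := fun i hi => ⟨i, hi, rfl⟩
  have hsub : ∀ i < n, ∀ j < n, i ≠ j → z i - z j ≠ 0 := fun i hi j hj hij h =>
    hij (hz i hi j hj (sub_eq_zero.1 h))
  have hv0 : v ≠ 0 := by
    rintro rfl
    obtain ⟨x, hx⟩ := hv _ (hzmem 0 (by omega)) _ (hzmem 1 (by omega))
    exact hsub 0 (by omega) 1 (by omega) zero_ne_one (by simpa using hx)
  refine sum_div_ne_zero_of_re_neg (c := v ^ (2 * (n - 1))) (nonempty_range_iff.2 (by omega))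
    (fun i hi => by simpa using hα i (mem_range.1 hi)) (fun i hi => ?_) (pow_ne_zero _ hv0)
  have hi' := mem_range.1 hi
  have herase : ∀ j ∈ (range n).erase i, j < n ∧ j ≠ i := fun j hj =>
    ⟨mem_range.1 (mem_of_mem_erase hj), ne_of_mem_erase hj⟩
  simpa [card_erase_of_mem hi] using exists_pos_prod_sq_eq_ofReal_mul
    (fun j hj => hsub i hi' j (herase j hj).1 (herase j hj).2.symm)
    (fun j hj => hv _ (hzmem i hi') _ (hzmem j (herase j hj).1))
end

section
/- A complex polynomial of degree n ≥ 2 has at most ⌈n/2⌉ distinct real attractive fixed points. -/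
open Polynomial Filter Set Topology

/-!
An attractive real fixed point `x` of `p` is a zero of the real polynomial `u = Re (p - X)` with
`u'(x) = Re p'(x) - 1 < 0`. Between two zeros where `u` is decreasing, `u` must vanish once more,
so `k` such points give `2k - 1` distinct real zeros of `u`, while `deg u ≤ n`.
-/

theorem Finset.two_mul_card_le_card_add_one_of_interlace {α : Type*} [LinearOrder α]
    {S R : Finset α} (hSR : S ⊆ R)
    (hR : ∀ a ∈ S, ∀ b ∈ S, a < b → ∃ r ∈ R, a < r ∧ r < b) :
    2 * S.card ≤ R.card + 1 := by
  induction S using Finset.induction_on_max generalizing R with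
  | empty => simp
  | insert a S hlt ih =>
    have ha : a ∈ R := hSR (mem_insert_self a S)
    rcases S.eq_empty_or_nonempty with rfl | hne
    · simpa using card_pos.2 ⟨a, ha⟩
    set b := S.max' hne
    have hb : b ∈ S := S.max'_mem hne
    obtain ⟨r, hr, hbr, hra⟩ := hR b (mem_insert_of_mem hb) a (mem_insert_self a S) (hlt b hb)
    -- Drop `a` and every point of `R` from `r` on: at least two points of `R` go, one of `S`.
    have hlow : 2 * S.card ≤ (R.filter (· < r)).card + 1 := by
      refine ih (fun x hx => mem_filter.2
        ⟨hSR (mem_insert_of_mem hx), (S.le_max' x hx).trans_lt hbr⟩) ?_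
      intro x hx y hy hxy
      obtain ⟨r', hr', hxr', hr'y⟩ := hR x (mem_insert_of_mem hx) y (mem_insert_of_mem hy) hxy
      have hr'r : r' < r := hr'y.trans_le ((S.le_max' y hy).trans hbr.le)
      exact ⟨r', mem_filter.2 ⟨hr', hr'r⟩, hxr', hr'y⟩
    have hhigh : 2 ≤ (R.filter (¬ · < r)).card := by
      refine (card_pair hra.ne).symm.le.trans (card_le_card fun x hx => ?_)
      rcases mem_insert.1 hx with rfl | hx
      · simp [hr]
      · rw [mem_singleton.1 hx]; simp [ha, hra.le]
    have hsplit := card_filter_add_card_filter_not (s := R) (· < r)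
    rw [card_insert_of_notMem fun h => lt_irrefl a (hlt a h)]
    omega

theorem HasDerivAt.eventually_neg_nhdsGT {f : ℝ → ℝ} {a f' : ℝ} (hd : HasDerivAt f f' a)
    (hf' : f' < 0) (ha : f a = 0) : ∀ᶠ x in 𝓝[>] a, f x < 0 := by
  filter_upwards [hd.hasDerivWithinAt.limsup_slope_le' (lt_irrefl a) hf', self_mem_nhdsWithin]
    with x hx hax
  rw [slope_def_field, ha, sub_zero, div_neg_iff] at hx
  exact hx.elim (fun h => absurd h.2 (not_lt.2 (sub_pos.2 hax).le)) fun h => h.1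

theorem HasDerivAt.eventually_pos_nhdsLT {f : ℝ → ℝ} {a f' : ℝ} (hd : HasDerivAt f f' a)
    (hf' : f' < 0) (ha : f a = 0) : ∀ᶠ x in 𝓝[<] a, 0 < f x := by
  filter_upwards [hd.hasDerivWithinAt.limsup_slope_le' (lt_irrefl a) hf', self_mem_nhdsWithin]
    with x hx hax
  rw [slope_def_field, ha, sub_zero, div_neg_iff] at hx
  exact hx.elim (fun h => h.1) fun h => absurd h.2 (not_lt.2 (sub_neg.2 hax).le)

theorem exists_zero_between_of_hasDerivAt_neg {f : ℝ → ℝ} {a b fa fb : ℝ}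
    (hf : ContinuousOn f (Icc a b)) (hab : a < b) (ha : f a = 0) (hb : f b = 0)
    (hfa : HasDerivAt f fa a) (hfb : HasDerivAt f fb b) (hfa' : fa < 0) (hfb' : fb < 0) :
    ∃ c ∈ Ioo a b, f c = 0 := by
  obtain ⟨a', hfa', ha'⟩ :=
    ((hfa.eventually_neg_nhdsGT hfa' ha).and (Ioo_mem_nhdsGT hab)).exists
  obtain ⟨b', hfb', hb'⟩ :=
    ((hfb.eventually_pos_nhdsLT hfb' hb).and (Ioo_mem_nhdsLT ha'.2)).exists
  obtain ⟨c, hc, hfc⟩ := intermediate_value_Ioo hb'.1.le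
    (hf.mono (Icc_subset_Icc ha'.1.le hb'.2.le)) ⟨hfa', hfb'⟩
  exact ⟨c, ⟨ha'.1.trans hc.1, hc.2.trans hb'.2⟩, hfc⟩

theorem Polynomial.two_mul_card_le_natDegree_add_one {u : ℝ[X]} {S : Finset ℝ}
    (hS : ∀ x ∈ S, u.IsRoot x ∧ u.derivative.eval x < 0) :
    2 * S.card ≤ u.natDegree + 1 := by
  rcases eq_or_ne u 0 with rfl | hu
  · have : S = ∅ := Finset.eq_empty_of_forall_notMem fun x hx => by simpa using (hS x hx).2
    simp [this]
  calc 2 * S.card ≤ u.roots.toFinset.card + 1 := by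
        refine Finset.two_mul_card_le_card_add_one_of_interlace
          (fun x hx => by simpa [hu] using (hS x hx).1) fun a ha b hb hab => ?_
        obtain ⟨c, hc, hfc⟩ := exists_zero_between_of_hasDerivAt_neg u.continuousOn hab
          (hS a ha).1 (hS b hb).1 (u.hasDerivAt a) (u.hasDerivAt b) (hS a ha).2 (hS b hb).2
        exact ⟨c, by simpa [hu] using hfc, hc⟩
    _ ≤ u.natDegree + 1 := by
        gcongr
        exact (Multiset.toFinset_card_le _).trans (card_roots' u)

noncomputable def Polynomial.rePart (q : ℂ[X]) : ℝ[X] :=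
  ∑ i ∈ Finset.range (q.natDegree + 1), C (q.coeff i).re * X ^ i

theorem Polynomial.natDegree_rePart_le (q : ℂ[X]) : q.rePart.natDegree ≤ q.natDegree :=
  natDegree_sum_le_of_forall_le _ _ fun i hi =>
    (natDegree_C_mul_X_pow_le _ i).trans (Nat.lt_succ_iff.1 (Finset.mem_range.1 hi))

theorem Polynomial.eval_rePart (q : ℂ[X]) (x : ℝ) :
    q.rePart.eval x = (q.eval (x : ℂ)).re := by
  rw [rePart, eval_finsetSum, eval_eq_sum_range (p := q), Complex.re_sum]
  refine Finset.sum_congr rfl fun i _ => ?_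
  rw [← Complex.ofReal_pow, Complex.re_mul_ofReal]
  simp

theorem Polynomial.eval_derivative_rePart (q : ℂ[X]) (x : ℝ) :
    q.rePart.derivative.eval x = (q.derivative.eval (x : ℂ)).re :=
  (q.rePart.hasDerivAt x).unique <| by
    simpa only [← eval_rePart] using (q.hasDerivAt (x : ℂ)).real_of_complex

theorem real_attractive_fixed_points_bound (p : ℂ[X]) (n : ℕ) (hn : 2 ≤ n)
    (hdeg : p.natDegree = n) (k : ℕ) (z : ℕ → ℝ)
    (hz : ∀ i < k, ∀ j < k, z i = z j → i = j)
    (hfix : ∀ i < k, p.eval (z i : ℂ) = (z i : ℂ))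
    (hattr : ∀ i < k, ‖p.derivative.eval (z i : ℂ)‖ < 1) :
    k ≤ (n + 1) / 2 := by
  set S := (Finset.range k).image z
  have hS : S.card = k := by
    rw [Finset.card_image_of_injOn fun i hi j hj => hz i (by simpa using hi) j (by simpa using hj)]
    exact Finset.card_range k
  have hdeg' : (p - X).rePart.natDegree ≤ n :=
    (natDegree_rePart_le _).trans <|
      (natDegree_sub_le _ _).trans (by rw [hdeg, natDegree_X]; omega)
  have hroots : ∀ x ∈ S, (p - X).rePart.IsRoot x ∧ (p - X).rePart.derivative.eval x < 0 := by
    simp only [S, Finset.mem_image, Finset.mem_range]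
    rintro _ ⟨i, hi, rfl⟩
    refine ⟨by simp [IsRoot, eval_rePart, hfix i hi], ?_⟩
    rw [eval_derivative_rePart, derivative_sub, derivative_X, eval_sub, eval_one, Complex.sub_re,
      Complex.one_re, sub_neg]
    exact (Complex.re_le_norm _).trans_lt (hattr i hi)
  have hcount := two_mul_card_le_natDegree_add_one hroots
  omega
end

section
/- For n ≥ 2, the polynomial p(z) = (-z^{n+1} + (n+1)z)/n has each n-th root of unity as an attractive fixed point; in particular p has degree n + 1 and at least n attractive fixed points (indeed p'(ω) = 0 for every n-th root of unity ω). -/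
/-!
Both `p - X = X (1 - Xⁿ) / n` and `p' = (n + 1)(1 - Xⁿ) / n` are multiples of `1 - Xⁿ`, so every
`n`-th root of unity is a fixed point at which `p'` vanishes: it is superattracting.
-/

open Polynomial

noncomputable def attractingPoly (K : Type*) [Field K] (n : ℕ) : K[X] :=
  C (-(1 : K) / n) * X ^ (n + 1) + C ((n + 1 : K) / n) * X

section

variable {K : Type*} [Field K] {n : ℕ}

theorem natDegree_attractingPoly (hn : (n : K) ≠ 0) : (attractingPoly K n).natDegree = n + 1 := by
  unfold attractingPoly
  rw [natDegree_add_eq_left_of_natDegree_lt] <;>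
    rw [natDegree_C_mul_X_pow _ _ (by simpa using hn)]
  have hn' : n ≠ 0 := by rintro rfl; simp at hn
  exact (natDegree_C_mul_le _ _).trans_lt (by rw [natDegree_X]; omega)

theorem attractingPoly_sub_X (hn : (n : K) ≠ 0) :
    attractingPoly K n - X = C (1 / n : K) * X * (1 - X ^ n) := by
  have hC : C ((n + 1 : K) / n) = C (1 / n : K) + 1 := by
    rw [← C_1, ← C_add]; congr 1; field_simp; ring
  rw [attractingPoly, hC, div_eq_mul_one_div, neg_one_mul, C_neg]
  ring

theorem derivative_attractingPoly :
    derivative (attractingPoly K n) = C ((n + 1 : K) / n) * (1 - X ^ n) := by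
  rw [attractingPoly, derivative_add, derivative_C_mul_X_pow, derivative_C_mul_X,
    add_tsub_cancel_right, mul_sub, mul_one, sub_eq_neg_add, ← neg_mul, ← C_neg]
  congr 3
  push_cast
  ring

theorem eval_attractingPoly_of_pow_eq_one {ω : K} (hn : (n : K) ≠ 0) (hω : ω ^ n = 1) :
    (attractingPoly K n).eval ω = ω := by
  simpa [hω, sub_eq_zero] using congrArg (eval ω) (attractingPoly_sub_X hn)

theorem eval_derivative_attractingPoly_of_pow_eq_one {ω : K} (hω : ω ^ n = 1) :
    (derivative (attractingPoly K n)).eval ω = 0 := by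
  simp [derivative_attractingPoly, hω]

end

theorem roots_of_unity_attractive (n : ℕ) (hn : 2 ≤ n)
    (p : ℂ[X]) (hp : p = C (-(1 : ℂ) / n) * X ^ (n + 1) + C ((n + 1 : ℂ) / n) * X) :
    p.natDegree = n + 1 ∧
      ∀ ω : ℂ, ω ^ n = 1 →
        p.eval ω = ω ∧ p.derivative.eval ω = 0 ∧ ‖p.derivative.eval ω‖ < 1 := by
  have hnC : (n : ℂ) ≠ 0 := Nat.cast_ne_zero.mpr (by omega)
  replace hp : p = attractingPoly ℂ n := hp
  subst hp
  refine ⟨natDegree_attractingPoly hnC, fun ω hω => ?_⟩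
  have hderiv := eval_derivative_attractingPoly_of_pow_eq_one hω
  exact ⟨eval_attractingPoly_of_pow_eq_one hnC hω, hderiv, by simp [hderiv]⟩
end

section
/- A complex polynomial p of degree n ≥ 2 in which every fixed point z satisfies |p'(z)| < 1 cannot exist; i.e., every polynomial of degree n ≥ 2 has at least one fixed point z with |p'(z)| ≥ 1. -/
/-!
If `q` has degree `n ≥ 2` and only simple roots, then `∑ 1 / q'(z) = 0` over its roots: these are
the residues of `1 / q`, whose residue at infinity vanishes; algebraically, the sum is
`q.leadingCoeff⁻¹` times the coefficient of `X ^ (n - 1)` in the Lagrange interpolant of the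
constant `1` at the roots. Applied to `q = p - X`, a fixed point `z` with `‖p'(z)‖ < 1` has
`re q'(z) < 0`, hence `re (1 / q'(z)) < 0`; so if every fixed point were attracting, the fixed
points would be simple and the real parts of the `n` terms of a vanishing sum would all be negative.
-/

open Polynomial

namespace Lagrange

variable {F ι : Type*} [Field F] [DecidableEq ι] {s : Finset ι} {v : ι → F}

theorem sum_nodalWeight_eq_zero (hvs : Set.InjOn v s) (hs : 2 ≤ s.card) :
    ∑ i ∈ s, nodalWeight s v i = 0 := by
  have coeff_basis : ∀ i ∈ s, (Lagrange.basis s v i).coeff (s.card - 1) = nodalWeight s v i := by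
    intro i hi
    rw [basis_eq_prod_sub_inv_mul_nodal_div hi, ← nodal_erase_eq_nodal_div hi, coeff_C_mul]
    have hdeg : (nodal (s.erase i) v).natDegree = s.card - 1 := by
      rw [natDegree_nodal, Finset.card_erase_of_mem hi]
    rw [← hdeg, nodal_monic.coeff_natDegree, mul_one]
  have hsum := congrArg (coeff · (s.card - 1)) (sum_basis hvs (Finset.card_pos.mp (by omega)))
  simp only [finsetSum_coeff] at hsum
  rwa [Finset.sum_congr rfl coeff_basis, coeff_one, if_neg (by omega)] at hsum

end Lagrange

namespace Polynomial

theorem nodup_roots_of_derivative_eval_ne_zero {R : Type*} [CommRing R] [IsDomain R] {q : R[X]}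
    (h : ∀ z ∈ q.roots, q.derivative.eval z ≠ 0) : q.roots.Nodup := by
  classical
  rcases eq_or_ne q 0 with rfl | hq
  · simp
  refine Multiset.nodup_iff_count_le_one.mpr fun z => not_lt.mp fun hz => ?_
  rw [count_roots, one_lt_rootMultiplicity_iff_isRoot hq] at hz
  exact h z ((mem_roots hq).mpr hz.1) hz.2

variable {F : Type*} [Field F] [DecidableEq F]

theorem Splits.eq_C_leadingCoeff_mul_nodal {q : F[X]} (hq : q.Splits) (hnodup : q.roots.Nodup) :
    q = C q.leadingCoeff * Lagrange.nodal q.roots.toFinset id := by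
  conv_lhs => rw [hq.eq_prod_roots]
  rw [Lagrange.nodal_eq, Finset.prod_eq_multiset_prod, Multiset.toFinset_val, hnodup.dedup]
  rfl

theorem Splits.sum_inv_derivative_eval_roots_eq_zero {q : F[X]} (hq : q.Splits)
    (hnodup : q.roots.Nodup) (hdeg : 2 ≤ q.natDegree) :
    ∑ z ∈ q.roots.toFinset, (q.derivative.eval z)⁻¹ = 0 := by
  set s := q.roots.toFinset
  have hcard : s.card = q.natDegree := by
    rw [Multiset.toFinset_card_of_nodup hnodup, hq.natDegree_eq_card_roots]
  have inv_derivative : ∀ z ∈ s,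
      (q.derivative.eval z)⁻¹ = q.leadingCoeff⁻¹ * Lagrange.nodalWeight s id z := by
    intro z hz
    rw [Lagrange.nodalWeight_eq_eval_derivative_nodal hz, ← mul_inv, id,
      ← eval_C (a := q.leadingCoeff) (x := z), ← eval_mul, ← derivative_C_mul,
      ← hq.eq_C_leadingCoeff_mul_nodal hnodup]
  rw [Finset.sum_congr rfl inv_derivative, ← Finset.mul_sum,
    Lagrange.sum_nodalWeight_eq_zero Function.injective_id.injOn (by omega), mul_zero]

end Polynomial

theorem Complex.inv_re_neg {z : ℂ} (hz : z.re < 0) : z⁻¹.re < 0 := by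
  have hz0 : z ≠ 0 := fun h => by simp [h] at hz
  rw [Complex.inv_re]
  exact div_neg_of_neg_of_pos hz (Complex.normSq_pos.mpr hz0)

theorem exists_unattractive_fixed_point (p : ℂ[X]) (hdeg : 2 ≤ p.natDegree) :
    ∃ z : ℂ, p.eval z = z ∧ 1 ≤ ‖p.derivative.eval z‖ := by
  classical
  by_contra! hattr
  set q : ℂ[X] := p - X
  have hqdeg : q.natDegree = p.natDegree :=
    natDegree_sub_eq_left_of_natDegree_lt (by rw [natDegree_X]; omega)
  have hq0 : q ≠ 0 := fun h => by rw [h, natDegree_zero] at hqdeg; omega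
  have re_derivative_neg : ∀ z ∈ q.roots, (q.derivative.eval z).re < 0 := by
    intro z hz
    have hfix : p.eval z = z := by simpa [q, sub_eq_zero] using (mem_roots hq0).mp hz
    have hre := (Complex.re_le_norm _).trans_lt (hattr z hfix)
    simpa [q] using hre
  have hnodup : q.roots.Nodup := nodup_roots_of_derivative_eval_ne_zero fun z hz h =>
    by simpa [h] using re_derivative_neg z hz
  have hsplits : q.Splits := IsAlgClosed.splits q
  have hsum := hsplits.sum_inv_derivative_eval_roots_eq_zero hnodup (by omega)
  have hne : q.roots.toFinset.Nonempty := by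
    rw [← Finset.card_pos, Multiset.toFinset_card_of_nodup hnodup,
      ← hsplits.natDegree_eq_card_roots]
    omega
  have hneg := Finset.sum_neg (fun z hz =>
    Complex.inv_re_neg (re_derivative_neg z (Multiset.mem_toFinset.mp hz))) hne
  rw [← Complex.re_sum, hsum, Complex.zero_re] at hneg
  exact hneg.false
end
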